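/- Define g₂ : (1,∞) → ℝ by g₂(r) = −32π/(r²−1) − 48π r^{−1} log((r+1)/(r−1)) − 128π log(1 − r^{−2}). Then g₂ is strictly increasing on (1,∞), and as r → ∞ one has the asymptotic expansion g₂(r) = −(128π/15) r^{−6} + O(r^{−8}), i.e. there exist constants C > 0 and r₀ > 1 such that |g₂(r) + (128π/15) r^{−6}| ≤ C r^{−8} for all r ≥ r₀. -/

import Mathlib

/-!
Put `x = r⁻¹ ∈ (0, 1)`. Then
`g₂ = -32π x²/(1 - x²) - 48π x (log (1 + x) - log (1 - x)) - 128π log (1 - x²)`.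
Truncating the series `log (1 + x) - log (1 - x) = ∑ 2 x^(2k+1)/(2k+1)`, whose terms are
nonnegative, after three terms bounds the `x`-derivative of this expression by
`-(32π/5) x⁵ (8 - x² + 3x⁴)/(1 - x²)² < 0`, so `g₂` increases in `r`.
For the expansion, the Taylor polynomials of `log (1 ± x)` and `log (1 - x²)` cancel the terms
of order `x²` and `x⁴` and leave `-(128π/15) x⁶`; the remainder estimate
`|∑_{i<n} x^(i+1)/(i+1) + log (1 - x)| ≤ |x|^(n+1)/(1 - |x|)` bounds the rest by a multiple
of `x⁸` once `|x| ≤ 1/2`.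
-/

open Real

/-- The radial profile of the leading-order reduced Willmore energy of outlying
coordinate spheres in Schwarzschild of mass 2. -/
noncomputable def g2 (r : ℝ) : ℝ :=
  -(32 * π) / (r ^ 2 - 1) - 48 * π * r⁻¹ * Real.log ((r + 1) / (r - 1))
    - 128 * π * Real.log (1 - (r ^ 2)⁻¹)

open Set

theorem le_log_one_add_sub_log_one_sub {x : ℝ} (hx₀ : 0 ≤ x) (hx₁ : x < 1) :
    2 * x + 2 * x ^ 3 / 3 + 2 * x ^ 5 / 5 ≤ log (1 + x) - log (1 - x) := by
  have hsum := hasSum_log_sub_log_of_abs_lt_one (abs_lt.2 ⟨by linarith, hx₁⟩)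
  have := sum_le_hasSum (Finset.range 3) (fun k _ => by positivity) hsum
  norm_num [Finset.sum_range_succ] at this
  linarith

theorem abs_log_one_add_sub_log_one_sub_sub_le {x : ℝ} (hx : |x| < 1) :
    |log (1 + x) - log (1 - x) - (2 * x + 2 * x ^ 3 / 3 + 2 * x ^ 5 / 5)|
      ≤ 2 * |x| ^ 7 / (1 - |x|) := by
  have hplus := abs_log_sub_add_sum_range_le hx 6
  have hminus := abs_log_sub_add_sum_range_le (x := -x) (by rwa [abs_neg]) 6
  rw [abs_neg] at hminus
  calc _ = |(∑ i ∈ Finset.range 6, (-x) ^ (i + 1) / (i + 1) + log (1 - -x))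
          - (∑ i ∈ Finset.range 6, x ^ (i + 1) / (i + 1) + log (1 - x))| := by
        congr 1; simp only [Finset.sum_range_succ, sub_neg_eq_add]; push_cast; ring
    _ ≤ _ := (abs_sub _ _).trans (by rw [mul_div_assoc, two_mul]; exact add_le_add hminus hplus)

theorem abs_log_one_sub_add_le {y : ℝ} (hy : |y| < 1) :
    |log (1 - y) + (y + y ^ 2 / 2 + y ^ 3 / 3)| ≤ |y| ^ 4 / (1 - |y|) := by
  have := abs_log_sub_add_sum_range_le hy 3
  norm_num [Finset.sum_range_succ] at this
  rwa [add_comm]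

noncomputable def g2Recip (x : ℝ) : ℝ :=
  -(32 * π) * x ^ 2 / (1 - x ^ 2) - 48 * π * x * (log (1 + x) - log (1 - x))
    - 128 * π * log (1 - x ^ 2)

theorem g2_eq_g2Recip_inv {r : ℝ} (hr : 1 < r) : g2 r = g2Recip r⁻¹ := by
  have hr₀ : r ≠ 0 := by positivity
  have hratio : (r + 1) / (r - 1) = (1 + r⁻¹) / (1 - r⁻¹) := by
    field_simp
  have hsq : r ^ 2 - 1 ≠ 0 := by nlinarith
  have hinv : r⁻¹ < 1 := inv_lt_one_of_one_lt₀ hr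
  rw [g2, g2Recip, hratio, log_div (by positivity) (by linarith), inv_pow]
  field_simp

theorem hasDerivAt_g2Recip {x : ℝ} (hx : |x| < 1) :
    HasDerivAt g2Recip
      (π * (160 * x / (1 - x ^ 2) - 64 * x / (1 - x ^ 2) ^ 2
        - 48 * (log (1 + x) - log (1 - x)))) x := by
  obtain ⟨hx₁, hx₂⟩ := abs_lt.1 hx
  have hsq : 1 - x ^ 2 ≠ 0 := by nlinarith
  have hadd : 1 + x ≠ 0 := by linarith
  have hsub : 1 - x ≠ 0 := by linarith
  have hsq' : HasDerivAt (fun y => 1 - y ^ 2) (-(2 * x)) x := by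
    simpa using (hasDerivAt_pow 2 x).const_sub 1
  have hfrac := ((hasDerivAt_pow 2 x).const_mul (-(32 * π))).div hsq' hsq
  have hplus := ((hasDerivAt_id x).const_add 1).log hadd
  have hminus := ((hasDerivAt_id x).const_sub 1).log hsub
  have hmul := ((hasDerivAt_id x).const_mul (48 * π)).mul (hplus.sub hminus)
  have hlog := (hsq'.log hsq).const_mul (128 * π)
  refine ((hfrac.sub hmul).sub hlog).congr_deriv ?_
  simp only [id, Pi.sub_apply]
  field_simp
  ring

theorem deriv_g2Recip_neg {x : ℝ} (hx₀ : 0 < x) (hx₁ : x < 1) : deriv g2Recip x < 0 := by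
  rw [(hasDerivAt_g2Recip (abs_lt.2 ⟨by linarith, hx₁⟩)).deriv]
  refine mul_neg_of_pos_of_neg pi_pos ?_
  have hlog := le_log_one_add_sub_log_one_sub hx₀.le hx₁
  have hsq : 0 < 1 - x ^ 2 := by nlinarith
  have hseries : 160 * x / (1 - x ^ 2) - 64 * x / (1 - x ^ 2) ^ 2
        - 48 * (2 * x + 2 * x ^ 3 / 3 + 2 * x ^ 5 / 5)
      = -(32 / 5 * x ^ 5 * (8 - x ^ 2 + 3 * x ^ 4) / (1 - x ^ 2) ^ 2) := by
    field_simp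
    ring
  have hpos : 0 < 32 / 5 * x ^ 5 * (8 - x ^ 2 + 3 * x ^ 4) / (1 - x ^ 2) ^ 2 := by
    have : 0 < 8 - x ^ 2 + 3 * x ^ 4 := by nlinarith
    positivity
  linarith

theorem strictAntiOn_g2Recip : StrictAntiOn g2Recip (Ioo 0 1) := by
  refine strictAntiOn_of_deriv_neg (convex_Ioo 0 1) (fun x hx => ?_) fun x hx => ?_
  · exact (hasDerivAt_g2Recip (abs_lt.2 ⟨by linarith [hx.1], hx.2⟩)).continuousAt.continuousWithinAt
  · rw [interior_Ioo] at hx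
    exact deriv_g2Recip_neg hx.1 hx.2

theorem strictMonoOn_g2 : StrictMonoOn g2 (Ioi 1) := by
  intro a (ha : 1 < a) b (hb : 1 < b) hab
  rw [g2_eq_g2Recip_inv ha, g2_eq_g2Recip_inv hb]
  have hmem {r : ℝ} (hr : 1 < r) : r⁻¹ ∈ Ioo 0 1 := ⟨by positivity, inv_lt_one_of_one_lt₀ hr⟩
  exact strictAntiOn_g2Recip (hmem hb) (hmem ha) ((inv_lt_inv₀ (by positivity) (by positivity)).2 hab)

theorem g2Recip_add_eq {x : ℝ} (hx : 1 - x ^ 2 ≠ 0) :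
    g2Recip x + 128 * π / 15 * x ^ 6
      = -(32 * π * (x ^ 8 / (1 - x ^ 2)))
        - 48 * π * (x * (log (1 + x) - log (1 - x) - (2 * x + 2 * x ^ 3 / 3 + 2 * x ^ 5 / 5)))
        - 128 * π * (log (1 - x ^ 2) + (x ^ 2 + (x ^ 2) ^ 2 / 2 + (x ^ 2) ^ 3 / 3)) := by
  rw [g2Recip]
  field_simp
  ring

theorem abs_g2Recip_add_le {x : ℝ} (hx : |x| ≤ 1 / 2) :
    |g2Recip x + 128 * π / 15 * x ^ 6| ≤ 1216 / 3 * π * x ^ 8 := by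
  have hsq : x ^ 2 ≤ 1 / 4 := by nlinarith [sq_abs x, abs_nonneg x]
  have hsq_abs : |x ^ 2| = x ^ 2 := abs_of_nonneg (sq_nonneg x)
  have hx8 : |x| ^ 8 = x ^ 8 := by rw [pow_abs, abs_of_nonneg (by positivity)]
  have hartanh := abs_log_one_add_sub_log_one_sub_sub_le (x := x) (by linarith)
  have hlog : |log (1 - x ^ 2) + (x ^ 2 + (x ^ 2) ^ 2 / 2 + (x ^ 2) ^ 3 / 3)|
      ≤ x ^ 8 / (1 - x ^ 2) := by
    calc _ ≤ |x ^ 2| ^ 4 / (1 - |x ^ 2|) :=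
          abs_log_one_sub_add_le (by rw [hsq_abs]; linarith)
      _ = x ^ 8 / (1 - x ^ 2) := by rw [hsq_abs]; ring
  have hfrac : x ^ 8 / (1 - x ^ 2) ≤ 4 / 3 * x ^ 8 := by
    rw [div_le_iff₀ (by linarith)]; nlinarith [pow_nonneg (sq_nonneg x) 4]
  have hartanh' : 2 * |x| ^ 7 / (1 - |x|) ≤ 4 * |x| ^ 7 := by
    rw [div_le_iff₀ (by linarith)]; nlinarith [pow_nonneg (abs_nonneg x) 7]
  have hpi := pi_pos
  rw [g2Recip_add_eq (by linarith)]
  calc _ ≤ 32 * π * (x ^ 8 / (1 - x ^ 2))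
        + 48 * π * (|x| * |log (1 + x) - log (1 - x) - (2 * x + 2 * x ^ 3 / 3 + 2 * x ^ 5 / 5)|)
        + 128 * π * |log (1 - x ^ 2) + (x ^ 2 + (x ^ 2) ^ 2 / 2 + (x ^ 2) ^ 3 / 3)| := by
        have hfrac_nonneg : 0 ≤ x ^ 8 / (1 - x ^ 2) := div_nonneg (by positivity) (by linarith)
        refine (abs_sub _ _).trans (add_le_add ((abs_sub _ _).trans (add_le_add ?_ ?_)) ?_) <;>
          simp only [abs_neg, abs_mul, abs_of_pos hpi, abs_of_nonneg hfrac_nonneg, Nat.abs_ofNat,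
            le_refl]
    _ ≤ 32 * π * (4 / 3 * x ^ 8) + 48 * π * (|x| * (4 * |x| ^ 7)) + 128 * π * (4 / 3 * x ^ 8) := by
        gcongr
        · linarith
        · exact hlog.trans hfrac
    _ = 1216 / 3 * π * x ^ 8 := by linear_combination 192 * π * hx8

theorem abs_g2_add_le {r : ℝ} (hr : 2 ≤ r) :
    |g2 r + 128 * π / 15 * (r ^ 6)⁻¹| ≤ 1216 / 3 * π * (r ^ 8)⁻¹ := by
  have hx : |r⁻¹| ≤ 1 / 2 := by
    rw [abs_inv, abs_of_pos (by linarith)]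
    exact one_div (2 : ℝ) ▸ inv_anti₀ (by norm_num) hr
  rw [g2_eq_g2Recip_inv (by linarith), ← inv_pow, ← inv_pow]
  exact abs_g2Recip_add_le hx

/-- `g₂` is strictly increasing on `(1,∞)` and `g₂(r) = −(128π/15) r⁻⁶ + O(r⁻⁸)`
as `r → ∞`. -/
theorem stmt11 :
    StrictMonoOn g2 (Set.Ioi 1) ∧
    ∃ C > 0, ∃ r₀ > 1, ∀ r ≥ r₀,
      |g2 r + (128 * π / 15) * (r ^ 6)⁻¹| ≤ C * (r ^ 8)⁻¹ :=
  ⟨strictMonoOn_g2, 1216 / 3 * π, by positivity, 2, by norm_num, fun _ hr => abs_g2_add_le hr⟩
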